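/- Let n ≥ 3 and 0 < 2s < 1. For x, y ∈ S^{n-1} with x ≠ y define L_{2s}(x·y) = (1/|Γ(-2s)|) ∫_0^∞ e^{-t(n-2)/2} P_{e^{-t}}(x·y) t^{-1-2s} dt. Then there exist constants 0 < c ≤ C, depending only on n and s, such that c / d(x,y)^{(n-1)+2s} ≤ L_{2s}(x·y) ≤ C / d(x,y)^{(n-1)+2s} for all x, y ∈ S^{n-1} with x ≠ y. -/

import Mathlib

open MeasureTheory

/-- The surface area `ω_{n-1} = 2π^{n/2}/Γ(n/2)` of the unit sphere `S^{n-1} ⊂ ℝ^n`. -/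
noncomputable def omegaSphere (n : ℕ) : ℝ :=
  2 * Real.pi ^ ((n : ℝ) / 2) / Real.Gamma ((n : ℝ) / 2)

/-- The Poisson kernel for the unit ball in `ℝ^n`:
`P_r(τ) = (1 - r²)/(ω_{n-1}(1 - 2rτ + r²)^{n/2})`. -/
noncomputable def spherePoissonKernel (n : ℕ) (r τ : ℝ) : ℝ :=
  (1 - r ^ 2) / (omegaSphere n * (1 - 2 * r * τ + r ^ 2) ^ ((n : ℝ) / 2))

/-!
Write `τ = cos d` with `d ∈ (0, π]` and `r = e^{-t}`. The denominator of the Poisson kernel is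
`1 - 2rτ + r² = (1 - r)² + 2r(1 - cos d)`, which is comparable to `d²` for `t ≤ d` and to
`min(t, 1)²` for `t ≥ d`, while `1 - r² ≍ min(t, 1)`. Hence the integrand is `≲ d^{-n} t^{-2s}` on
`(0, d]`, `≲ t^{-n-2s} + t^{-1-2s}` on `(d, ∞)` and `≳ d^{-n-2s}` on `(d, 2d]`; integrating these
bounds gives `≍ d^{-(n-1+2s)}`, the term `t^{-1-2s}` contributing `d^{-2s} ≤ π^{n-1} d^{-(n-1+2s)}`.
-/

open Real Set

lemma sq_rpow_half {a : ℝ} (ha : 0 ≤ a) (p : ℝ) : (a ^ 2) ^ (p / 2) = a ^ p := by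
  rw [← rpow_natCast_mul ha]
  norm_num [mul_div_cancel₀]

lemma rpow_neg_sub_eq {t : ℝ} (ht : 0 < t) (x y : ℝ) :
    t ^ (-x - y) = t * t ^ (-1 - y) / t ^ x := by
  rw [mul_comm t, ← rpow_add_one ht.ne', ← rpow_sub ht]
  ring_nf

lemma div_one_add_le_one_sub_exp_neg {t : ℝ} (ht : 0 ≤ t) : t / (1 + t) ≤ 1 - exp (-t) := by
  rw [div_le_iff₀ (by linarith)]
  have h := add_one_le_exp t
  have h' : exp (-t) * exp t = 1 := by rw [← exp_add]; simp
  nlinarith [exp_pos (-t)]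

lemma exp_neg_sq (t : ℝ) : exp (-t) ^ 2 = exp (-(2 * t)) := by
  rw [← exp_nat_mul]
  ring_nf

lemma one_sub_exp_neg_sq_le (t : ℝ) : 1 - exp (-t) ^ 2 ≤ 2 * t := by
  linarith [one_sub_le_exp_neg (2 * t), exp_neg_sq t]

lemma Real.Gamma_ne_zero_of_mem_Ioo {x : ℝ} (hx : x ∈ Ioo (-1) 0) : Gamma x ≠ 0 := fun h ↦ by
  have h₁ := Gamma_add_one hx.2.ne
  rw [h, mul_zero] at h₁
  exact (Gamma_pos_of_pos (by linarith [hx.1])).ne' h₁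

lemma real_inner_mem_Ico_of_ne {F : Type*} [NormedAddCommGroup F] [InnerProductSpace ℝ F]
    {x y : F} (hx : ‖x‖ = 1) (hy : ‖y‖ = 1) (hxy : x ≠ y) : inner ℝ x y ∈ Ico (-1) 1 :=
  ⟨neg_one_le_real_inner_of_norm_eq_one hx hy,
    lt_of_le_of_ne (by simpa [hx, hy] using real_inner_le_norm x y)
      (fun h ↦ hxy ((inner_eq_one_iff_of_norm_eq_one hx hy).1 h))⟩

lemma integrableOn_of_nonneg_of_le {X : Type*} [MeasurableSpace X] {μ : Measure X} {f g : X → ℝ}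
    {S : Set X} (hS : MeasurableSet S) (hf : AEStronglyMeasurable f (μ.restrict S))
    (hg : IntegrableOn g S μ) (hf0 : ∀ x ∈ S, 0 ≤ f x) (hfg : ∀ x ∈ S, f x ≤ g x) :
    IntegrableOn f S μ :=
  hg.mono' hf <| (ae_restrict_iff' hS).2 <| ae_of_all _ fun x hx ↦ by
    rw [Real.norm_of_nonneg (hf0 x hx)]
    exact hfg x hx

lemma integrableOn_Ioi_and_integral_le {f g₁ g₂ : ℝ → ℝ} {a b : ℝ} (hab : a ≤ b)
    (hf : Measurable f) (hf0 : ∀ t ∈ Ioi a, 0 ≤ f t)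
    (hg₁ : IntegrableOn g₁ (Ioc a b)) (hg₂ : IntegrableOn g₂ (Ioi b))
    (h₁ : ∀ t ∈ Ioc a b, f t ≤ g₁ t) (h₂ : ∀ t ∈ Ioi b, f t ≤ g₂ t) :
    IntegrableOn f (Ioi a) ∧
      ∫ t in Ioi a, f t ≤ (∫ t in Ioc a b, g₁ t) + ∫ t in Ioi b, g₂ t := by
  have hf₁ : IntegrableOn f (Ioc a b) := integrableOn_of_nonneg_of_le measurableSet_Ioc
    hf.aestronglyMeasurable hg₁ (fun t ht ↦ hf0 t ht.1) h₁
  have hf₂ : IntegrableOn f (Ioi b) := integrableOn_of_nonneg_of_le measurableSet_Ioi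
    hf.aestronglyMeasurable hg₂ (fun t ht ↦ hf0 t (hab.trans_lt ht)) h₂
  refine ⟨Ioc_union_Ioi_eq_Ioi hab ▸ hf₁.union hf₂, ?_⟩
  rw [← Ioc_union_Ioi_eq_Ioi hab, setIntegral_union Ioc_disjoint_Ioi_same measurableSet_Ioi hf₁ hf₂]
  exact add_le_add (setIntegral_mono_on hf₁ hg₁ measurableSet_Ioc h₁)
    (setIntegral_mono_on hf₂ hg₂ measurableSet_Ioi h₂)

lemma integral_Ioc_zero_const_rpow_mul_rpow {p q d : ℝ} (hq : q < 1) (hd : 0 < d) :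
    ∫ t in Ioc 0 d, d ^ (-p) * t ^ (-q) = 1 / (1 - q) / d ^ (p - 1 + q) := by
  rw [integral_const_mul, ← intervalIntegral.integral_of_le hd.le, integral_rpow (by left; linarith),
    zero_rpow (by linarith), sub_zero, mul_div_assoc', ← rpow_add hd,
    show -p + (-q + 1) = -(p - 1 + q) by ring, rpow_neg hd.le, show -q + 1 = 1 - q by ring]
  field_simp

lemma integral_Ioi_rpow_add_rpow_le {p q d R : ℝ} (hp : 1 ≤ p) (hq : 0 < q) (hd : 0 < d)
    (hdR : d ≤ R) :
    ∫ t in Ioi d, (t ^ (-p - q) + t ^ (-1 - q)) ≤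
      (1 / (p - 1 + q) + R ^ (p - 1) / q) / d ^ (p - 1 + q) := by
  have hD := rpow_pos_of_pos hd (p - 1 + q)
  have hRd : d ^ (-q) ≤ R ^ (p - 1) / d ^ (p - 1 + q) := by
    rw [le_div_iff₀ hD, ← rpow_add hd, show -q + (p - 1 + q) = p - 1 by ring]
    exact rpow_le_rpow hd.le hdR (by linarith)
  rw [integral_add (integrableOn_Ioi_rpow_of_lt (by linarith) hd)
      (integrableOn_Ioi_rpow_of_lt (by linarith) hd), integral_Ioi_rpow_of_lt (by linarith) hd,
    integral_Ioi_rpow_of_lt (by linarith) hd, show -p - q + 1 = -(p - 1 + q) by ring,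
    show -1 - q + 1 = -q by ring, rpow_neg hd.le (p - 1 + q), neg_div_neg_eq, neg_div_neg_eq,
    add_div]
  calc (d ^ (p - 1 + q))⁻¹ / (p - 1 + q) + d ^ (-q) / q
      = 1 / (p - 1 + q) / d ^ (p - 1 + q) + d ^ (-q) / q := by ring
    _ ≤ 1 / (p - 1 + q) / d ^ (p - 1 + q) + R ^ (p - 1) / d ^ (p - 1 + q) / q := by gcongr
    _ = _ := by ring

lemma omegaSphere_nonneg (n : ℕ) : 0 ≤ omegaSphere n := by
  unfold omegaSphere
  have := Gamma_nonneg_of_nonneg (s := (n : ℝ) / 2) (by positivity)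
  positivity

lemma omegaSphere_pos {n : ℕ} (hn : 1 ≤ n) : 0 < omegaSphere n := by
  have : (1 : ℝ) ≤ n := by exact_mod_cast hn
  unfold omegaSphere
  have := Gamma_pos_of_pos (s := (n : ℝ) / 2) (by positivity)
  positivity

lemma poisson_denom_eq (r τ : ℝ) : 1 - 2 * r * τ + r ^ 2 = (1 - r) ^ 2 + 2 * r * (1 - τ) := by
  ring

lemma spherePoissonKernel_nonneg (n : ℕ) {r τ : ℝ} (hr0 : 0 ≤ r) (hr1 : r ≤ 1) (hτ : τ ≤ 1) :
    0 ≤ spherePoissonKernel n r τ := by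
  have := omegaSphere_nonneg n
  have : 0 ≤ 1 - 2 * r * τ + r ^ 2 := by rw [poisson_denom_eq]; nlinarith
  have : 0 ≤ 1 - r ^ 2 := by nlinarith
  unfold spherePoissonKernel
  positivity

lemma spherePoissonKernel_le_of_sq_le {n : ℕ} (hn : 1 ≤ n) {r τ a : ℝ} (hr : r ^ 2 ≤ 1)
    (ha : 0 < a) (h : a ^ 2 ≤ 1 - 2 * r * τ + r ^ 2) :
    spherePoissonKernel n r τ ≤ (1 - r ^ 2) / (omegaSphere n * a ^ (n : ℝ)) := by
  have := omegaSphere_pos hn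
  rw [spherePoissonKernel, ← sq_rpow_half ha.le]
  gcongr

lemma le_spherePoissonKernel_of_le_sq {n : ℕ} (hn : 1 ≤ n) {r τ a : ℝ} (hr : r ^ 2 ≤ 1)
    (hq : 0 < 1 - 2 * r * τ + r ^ 2) (ha : 0 ≤ a) (h : 1 - 2 * r * τ + r ^ 2 ≤ a ^ 2) :
    (1 - r ^ 2) / (omegaSphere n * a ^ (n : ℝ)) ≤ spherePoissonKernel n r τ := by
  have := omegaSphere_pos hn
  rw [spherePoissonKernel, ← sq_rpow_half ha]
  gcongr

lemma sq_div_one_add_le_poisson_denom {τ t : ℝ} (hτ : τ ≤ 1) (ht : 0 ≤ t) :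
    (t / (1 + t)) ^ 2 ≤ 1 - 2 * exp (-t) * τ + exp (-t) ^ 2 := by
  have := div_one_add_le_one_sub_exp_neg ht
  rw [poisson_denom_eq]
  nlinarith [exp_pos (-t), div_nonneg ht (by linarith : (0 : ℝ) ≤ 1 + t)]

lemma spherePoissonKernel_exp_neg_le_of_le_one {n : ℕ} (hn : 1 ≤ n) {τ t : ℝ} (hτ : τ ≤ 1)
    (ht : 0 < t) (ht1 : t ≤ 1) :
    spherePoissonKernel n (exp (-t)) τ ≤ 2 * 2 ^ (n : ℝ) / omegaSphere n * t / t ^ (n : ℝ) := by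
  have := omegaSphere_pos hn
  have hq := sq_div_one_add_le_poisson_denom hτ ht.le
  have ht2 : t / 2 ≤ t / (1 + t) := div_le_div_of_nonneg_left ht.le (by linarith) (by linarith)
  have := one_sub_exp_neg_sq_le t
  have hr1 : exp (-t) ≤ 1 := exp_le_one_iff.2 (by linarith)
  calc spherePoissonKernel n (exp (-t)) τ
      ≤ (1 - exp (-t) ^ 2) / (omegaSphere n * (t / 2) ^ (n : ℝ)) :=
        spherePoissonKernel_le_of_sq_le hn (by nlinarith [exp_pos (-t)]) (by positivity)
          ((pow_le_pow_left₀ (by positivity) ht2 2).trans hq)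
    _ ≤ 2 * t / (omegaSphere n * (t / 2) ^ (n : ℝ)) := by gcongr
    _ = _ := by
        rw [div_rpow ht.le zero_le_two]
        field_simp

lemma spherePoissonKernel_exp_neg_le_of_one_le {n : ℕ} (hn : 1 ≤ n) {τ t : ℝ} (hτ : τ ≤ 1)
    (ht1 : 1 ≤ t) : spherePoissonKernel n (exp (-t)) τ ≤ 2 ^ (n : ℝ) / omegaSphere n := by
  have := omegaSphere_pos hn
  have hq := sq_div_one_add_le_poisson_denom (t := t) hτ (by linarith)
  have hr1 : exp (-t) ≤ 1 := exp_le_one_iff.2 (by linarith)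
  have ht2 : 1 / 2 ≤ t / (1 + t) := by rw [div_le_div_iff₀ (by norm_num) (by linarith)]; linarith
  calc spherePoissonKernel n (exp (-t)) τ
      ≤ (1 - exp (-t) ^ 2) / (omegaSphere n * (1 / 2) ^ (n : ℝ)) :=
        spherePoissonKernel_le_of_sq_le hn (by nlinarith [exp_pos (-t)]) (by positivity) ((pow_le_pow_left₀ (by positivity) ht2 2).trans hq)
    _ ≤ 1 / (omegaSphere n * (1 / 2) ^ (n : ℝ)) := by gcongr; nlinarith [exp_pos (-t)]
    _ = _ := by
        rw [div_rpow zero_le_one zero_le_two, one_rpow]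
        field_simp

-- `L_{2s}(τ) = |Γ(-2s)|⁻¹ ∫₀^∞ fracKernelIntegrand n s τ t dt`
noncomputable def fracKernelIntegrand (n : ℕ) (s τ t : ℝ) : ℝ :=
  exp (-(t * ((n : ℝ) - 2) / 2)) * spherePoissonKernel n (exp (-t)) τ * t ^ (-1 - 2 * s)

lemma measurable_fracKernelIntegrand (n : ℕ) (s τ : ℝ) :
    Measurable (fracKernelIntegrand n s τ) := by
  unfold fracKernelIntegrand spherePoissonKernel omegaSphere
  fun_prop

lemma fracKernelIntegrand_nonneg (n : ℕ) (s : ℝ) {τ t : ℝ} (hτ : τ ≤ 1) (ht : 0 ≤ t) :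
    0 ≤ fracKernelIntegrand n s τ t := by
  have := spherePoissonKernel_nonneg n (exp_pos (-t)).le (exp_le_one_iff.2 (by linarith)) hτ
  unfold fracKernelIntegrand
  positivity

lemma fracKernelIntegrand_le_spherePoissonKernel_mul {n : ℕ} (hn : 2 ≤ n) (s : ℝ) {τ t : ℝ}
    (hτ : τ ≤ 1) (ht : 0 ≤ t) :
    fracKernelIntegrand n s τ t ≤ spherePoissonKernel n (exp (-t)) τ * t ^ (-1 - 2 * s) := by
  have hn' : (2 : ℝ) ≤ n := by exact_mod_cast hn
  have := spherePoissonKernel_nonneg n (exp_pos (-t)).le (exp_le_one_iff.2 (by linarith)) hτ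
  unfold fracKernelIntegrand
  gcongr
  exact mul_le_of_le_one_left this (exp_le_one_iff.2 (by nlinarith))

lemma fracKernelIntegrand_cos_le_of_mem_Ioc {n : ℕ} (hn : 2 ≤ n) (s : ℝ) {d t : ℝ} (hd : d ≤ π)
    (ht : t ∈ Ioc 0 d) :
    fracKernelIntegrand n s (cos d) t ≤
      2 / (omegaSphere n * (exp (-π) / π) ^ (n : ℝ)) * (d ^ (-(n : ℝ)) * t ^ (-(2 * s))) := by
  obtain ⟨ht0, htd⟩ := ht
  have hd0 : 0 < d := ht0.trans_le htd
  have hω := omegaSphere_pos (n := n) (by omega)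
  have hr1 : exp (-t) ≤ 1 := exp_le_one_iff.2 (by linarith)
  have hrπ : exp (-π) ≤ exp (-t) := exp_le_exp.2 (by linarith)
  have hcos : 2 / π ^ 2 * d ^ 2 ≤ 1 - cos d := by
    have := cos_le_one_sub_mul_cos_sq (x := d) (by rw [abs_of_pos hd0]; exact hd)
    linarith
  have hq : (exp (-π) / π * d) ^ 2 ≤ 1 - 2 * exp (-t) * cos d + exp (-t) ^ 2 := by
    rw [poisson_denom_eq]
    calc (exp (-π) / π * d) ^ 2 = exp (-π) * exp (-π) * (d ^ 2 / π ^ 2) := by ring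
      _ ≤ 4 * exp (-t) * (d ^ 2 / π ^ 2) := by gcongr; nlinarith [exp_pos (-π)]
      _ = 2 * exp (-t) * (2 / π ^ 2 * d ^ 2) := by ring
      _ ≤ (1 - exp (-t)) ^ 2 + 2 * exp (-t) * (1 - cos d) := by
          nlinarith [sq_nonneg (1 - exp (-t)), exp_pos (-t)]
  have hP := spherePoissonKernel_le_of_sq_le (n := n) (by omega)
    (by nlinarith [exp_pos (-t)]) (by positivity) hq
  have := one_sub_exp_neg_sq_le t
  calc fracKernelIntegrand n s (cos d) t
      ≤ spherePoissonKernel n (exp (-t)) (cos d) * t ^ (-1 - 2 * s) :=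
        fracKernelIntegrand_le_spherePoissonKernel_mul hn s (cos_le_one d) ht0.le
    _ ≤ 2 * t / (omegaSphere n * (exp (-π) / π * d) ^ (n : ℝ)) * t ^ (-1 - 2 * s) := by
        gcongr
        exact hP.trans (by gcongr)
    _ = _ := by
        rw [mul_rpow (by positivity) hd0.le, rpow_neg hd0.le, show -1 - 2 * s = -(2 * s) - 1 by ring,
          rpow_sub_one ht0.ne']
        field_simp

lemma fracKernelIntegrand_le {n : ℕ} (hn : 2 ≤ n) (s : ℝ) {τ t : ℝ} (hτ : τ ≤ 1) (ht : 0 < t) :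
    fracKernelIntegrand n s τ t ≤
      2 * 2 ^ (n : ℝ) / omegaSphere n * (t ^ (-(n : ℝ) - 2 * s) + t ^ (-1 - 2 * s)) := by
  have hω := omegaSphere_pos (n := n) (by omega)
  have hT := rpow_pos_of_pos ht (-1 - 2 * s)
  have hT' := rpow_pos_of_pos ht (-(n : ℝ) - 2 * s)
  refine (fracKernelIntegrand_le_spherePoissonKernel_mul hn s hτ ht.le).trans ?_
  rcases le_total t 1 with ht1 | ht1
  · calc spherePoissonKernel n (exp (-t)) τ * t ^ (-1 - 2 * s)
        ≤ 2 * 2 ^ (n : ℝ) / omegaSphere n * t / t ^ (n : ℝ) * t ^ (-1 - 2 * s) := by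
          gcongr
          exact spherePoissonKernel_exp_neg_le_of_le_one (by omega) hτ ht ht1
      _ = 2 * 2 ^ (n : ℝ) / omegaSphere n * t ^ (-(n : ℝ) - 2 * s) := by
          rw [rpow_neg_sub_eq ht (n : ℝ)]
          ring
      _ ≤ _ := by gcongr; exact le_add_of_nonneg_right hT.le
  · calc spherePoissonKernel n (exp (-t)) τ * t ^ (-1 - 2 * s)
        ≤ 2 ^ (n : ℝ) / omegaSphere n * t ^ (-1 - 2 * s) := by
          gcongr
          exact spherePoissonKernel_exp_neg_le_of_one_le (by omega) hτ ht1
      _ ≤ _ := by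
          gcongr
          · linarith [rpow_pos_of_pos two_pos (n : ℝ)]
          · exact le_add_of_nonneg_left hT'.le

lemma le_fracKernelIntegrand_cos {n : ℕ} (hn : 2 ≤ n) (s : ℝ) {d t : ℝ} (hd : d ≤ π)
    (ht : t ∈ Ioc d (2 * d)) :
    exp (-(π * ((n : ℝ) - 2))) * 2 / ((1 + 4 * π) * 2 ^ (n : ℝ) * omegaSphere n) *
      t ^ (-(n : ℝ) - 2 * s) ≤ fracKernelIntegrand n s (cos d) t := by
  obtain ⟨hdt, ht2d⟩ := ht
  have ht0 : 0 < t := by linarith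
  have hn' : (2 : ℝ) ≤ n := by exact_mod_cast hn
  have hω := omegaSphere_pos (n := n) (by omega)
  have hr1 : exp (-t) < 1 := exp_lt_one_iff.2 (by linarith)
  have hrt := one_sub_le_exp_neg t
  have hcos : 1 - cos d ≤ d ^ 2 / 2 := by linarith [one_sub_sq_div_two_le_cos (x := d)]
  have hq0 : 0 < 1 - 2 * exp (-t) * cos d + exp (-t) ^ 2 := by
    rw [poisson_denom_eq]
    nlinarith [exp_pos (-t), cos_le_one d]
  have hq : 1 - 2 * exp (-t) * cos d + exp (-t) ^ 2 ≤ (2 * t) ^ 2 := by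
    rw [poisson_denom_eq]
    nlinarith [exp_pos (-t), cos_le_one d]
  have hP := le_spherePoissonKernel_of_le_sq (n := n) (by omega) (by nlinarith [exp_pos (-t)])
    hq0 (by positivity) hq
  have hnum : 2 * t / (1 + 4 * π) ≤ 1 - exp (-t) ^ 2 := by
    rw [exp_neg_sq]
    exact le_trans (div_le_div_of_nonneg_left (by positivity) (by positivity) (by linarith))
      (div_one_add_le_one_sub_exp_neg (by positivity))
  calc exp (-(π * ((n : ℝ) - 2))) * 2 / ((1 + 4 * π) * 2 ^ (n : ℝ) * omegaSphere n) *
        t ^ (-(n : ℝ) - 2 * s)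
      = exp (-(π * ((n : ℝ) - 2))) * (2 * t / (1 + 4 * π) / (omegaSphere n * (2 * t) ^ (n : ℝ))) *
          t ^ (-1 - 2 * s) := by
        rw [rpow_neg_sub_eq ht0 (n : ℝ), mul_rpow zero_le_two ht0.le]
        field_simp
    _ ≤ fracKernelIntegrand n s (cos d) t := by
        unfold fracKernelIntegrand
        gcongr
        · nlinarith
        · exact le_trans (by gcongr) hP

lemma exists_integral_fracKernelIntegrand_cos_le {n : ℕ} (hn : 2 ≤ n) {s : ℝ} (hs0 : 0 < s)
    (hs1 : 2 * s < 1) :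
    ∃ C, ∀ d ∈ Ioc 0 π, IntegrableOn (fracKernelIntegrand n s (cos d)) (Ioi 0) ∧
      ∫ t in Ioi 0, fracKernelIntegrand n s (cos d) t ≤ C / d ^ ((n : ℝ) - 1 + 2 * s) := by
  have hn' : (2 : ℝ) ≤ n := by exact_mod_cast hn
  set K₁ := 2 / (omegaSphere n * (exp (-π) / π) ^ (n : ℝ))
  set K₂ := 2 * 2 ^ (n : ℝ) / omegaSphere n
  have hK₂ : 0 ≤ K₂ := by have := omegaSphere_pos (n := n) (by omega); positivity
  refine ⟨K₁ * (1 / (1 - 2 * s)) + K₂ * (1 / ((n : ℝ) - 1 + 2 * s) + π ^ ((n : ℝ) - 1) / (2 * s)),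
    fun d ⟨hd0, hdπ⟩ ↦ ?_⟩
  have hint₁ : IntegrableOn (fun t ↦ K₁ * (d ^ (-(n : ℝ)) * t ^ (-(2 * s)))) (Ioc 0 d) :=
    ((intervalIntegral.intervalIntegrable_rpow' (by linarith)).1.const_mul _).const_mul _
  have hint₂ : IntegrableOn (fun t ↦ K₂ * (t ^ (-(n : ℝ) - 2 * s) + t ^ (-1 - 2 * s))) (Ioi d) :=
    ((integrableOn_Ioi_rpow_of_lt (by linarith) hd0).add
      (integrableOn_Ioi_rpow_of_lt (by linarith) hd0)).const_mul _
  obtain ⟨hint, hle⟩ := integrableOn_Ioi_and_integral_le hd0.le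
    (measurable_fracKernelIntegrand n s (cos d))
    (fun t ht ↦ fracKernelIntegrand_nonneg n s (cos_le_one d) (le_of_lt ht)) hint₁ hint₂
    (fun t ht ↦ fracKernelIntegrand_cos_le_of_mem_Ioc hn s hdπ ht)
    (fun t ht ↦ fracKernelIntegrand_le hn s (cos_le_one d) (hd0.trans ht))
  refine ⟨hint, hle.trans ?_⟩
  rw [integral_const_mul K₁, integral_const_mul K₂, integral_Ioc_zero_const_rpow_mul_rpow hs1 hd0]
  calc K₁ * (1 / (1 - 2 * s) / d ^ ((n : ℝ) - 1 + 2 * s)) +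
        K₂ * ∫ t in Ioi d, (t ^ (-(n : ℝ) - 2 * s) + t ^ (-1 - 2 * s))
      ≤ K₁ * (1 / (1 - 2 * s) / d ^ ((n : ℝ) - 1 + 2 * s)) +
        K₂ * ((1 / ((n : ℝ) - 1 + 2 * s) + π ^ ((n : ℝ) - 1) / (2 * s)) /
          d ^ ((n : ℝ) - 1 + 2 * s)) := by
        gcongr
        exact integral_Ioi_rpow_add_rpow_le (by linarith) (by linarith) hd0 hdπ
    _ = _ := by ring

lemma exists_le_integral_fracKernelIntegrand_cos {n : ℕ} (hn : 2 ≤ n) {s : ℝ} (hs : 0 ≤ s) :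
    ∃ c > 0, ∀ d ∈ Ioc 0 π, IntegrableOn (fracKernelIntegrand n s (cos d)) (Ioi 0) →
      c / d ^ ((n : ℝ) - 1 + 2 * s) ≤ ∫ t in Ioi 0, fracKernelIntegrand n s (cos d) t := by
  set k := exp (-(π * ((n : ℝ) - 2))) * 2 / ((1 + 4 * π) * 2 ^ (n : ℝ) * omegaSphere n)
  have hk : 0 < k := by
    have := omegaSphere_pos (n := n) (by omega)
    positivity
  refine ⟨k * 2 ^ (-(n : ℝ) - 2 * s), by positivity, fun d ⟨hd0, hdπ⟩ hint ↦ ?_⟩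
  have hsub : Ioc d (2 * d) ⊆ Ioi 0 := fun t ht ↦ hd0.trans ht.1
  have hmin (t : ℝ) (ht : t ∈ Ioc d (2 * d)) :
      k * (2 * d) ^ (-(n : ℝ) - 2 * s) ≤ fracKernelIntegrand n s (cos d) t :=
    le_trans (mul_le_mul_of_nonneg_left
      (rpow_le_rpow_of_nonpos (hd0.trans ht.1) ht.2 (by linarith)) hk.le)
      (le_fracKernelIntegrand_cos hn s hdπ ht)
  calc k * 2 ^ (-(n : ℝ) - 2 * s) / d ^ ((n : ℝ) - 1 + 2 * s)
      = k * (2 * d) ^ (-(n : ℝ) - 2 * s) * volume.real (Ioc d (2 * d)) := by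
        rw [Real.volume_real_Ioc_of_le (by linarith), mul_rpow zero_le_two hd0.le,
          show 2 * d - d = d by ring, mul_assoc, mul_assoc, ← rpow_add_one hd0.ne',
          show -(n : ℝ) - 2 * s + 1 = -((n : ℝ) - 1 + 2 * s) by ring, rpow_neg hd0.le]
        ring
    _ ≤ ∫ t in Ioc d (2 * d), fracKernelIntegrand n s (cos d) t :=
        setIntegral_ge_of_const_le_real measurableSet_Ioc measure_Ioc_lt_top.ne hmin
          (hint.mono_set hsub)
    _ ≤ ∫ t in Ioi 0, fracKernelIntegrand n s (cos d) t :=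
        setIntegral_mono_set hint ((ae_restrict_iff' measurableSet_Ioi).2 (ae_of_all _
          fun t ht ↦ fracKernelIntegrand_nonneg n s (cos_le_one d) (le_of_lt ht)))
          (ae_of_all _ hsub)

theorem stmt13 (n : ℕ) (hn : 3 ≤ n) (s : ℝ) (hs0 : 0 < 2 * s) (hs1 : 2 * s < 1) :
    ∃ c C : ℝ, 0 < c ∧ c ≤ C ∧ ∀ x y : EuclideanSpace ℝ (Fin n),
      x ∈ Metric.sphere (0 : EuclideanSpace ℝ (Fin n)) 1 →
      y ∈ Metric.sphere (0 : EuclideanSpace ℝ (Fin n)) 1 → x ≠ y →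
      (c / Real.arccos (inner ℝ x y : ℝ) ^ (((n : ℝ) - 1) + 2 * s) ≤
          (1 / |Real.Gamma (-(2 * s))|) *
            ∫ t in Set.Ioi (0 : ℝ),
              Real.exp (-(t * ((n : ℝ) - 2) / 2)) *
                spherePoissonKernel n (Real.exp (-t)) (inner ℝ x y : ℝ) * t ^ (-1 - 2 * s)) ∧
      (1 / |Real.Gamma (-(2 * s))|) *
          (∫ t in Set.Ioi (0 : ℝ),
            Real.exp (-(t * ((n : ℝ) - 2) / 2)) *
              spherePoissonKernel n (Real.exp (-t)) (inner ℝ x y : ℝ) * t ^ (-1 - 2 * s)) ≤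
        C / Real.arccos (inner ℝ x y : ℝ) ^ (((n : ℝ) - 1) + 2 * s) := by
  obtain ⟨c, hc, hlow⟩ := exists_le_integral_fracKernelIntegrand_cos (by omega : 2 ≤ n)
    (by linarith : 0 ≤ s)
  obtain ⟨C, hup⟩ := exists_integral_fracKernelIntegrand_cos_le (by omega : 2 ≤ n)
    (by linarith : 0 < s) hs1
  set A := 1 / |Gamma (-(2 * s))|
  have hA : 0 < A := one_div_pos.2 (abs_pos.2 (Gamma_ne_zero_of_mem_Ioo ⟨by linarith, by linarith⟩))
  refine ⟨A * c, A * max c C, by positivity, by gcongr; exact le_max_left c C,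
    fun x y hx hy hxy ↦ ?_⟩
  obtain ⟨hτ₁, hτ₂⟩ := real_inner_mem_Ico_of_ne (mem_sphere_zero_iff_norm.1 hx)
    (mem_sphere_zero_iff_norm.1 hy) hxy
  generalize inner ℝ x y = τ at hτ₁ hτ₂ ⊢
  have hd : arccos τ ∈ Ioc 0 π := ⟨arccos_pos.2 hτ₂, arccos_le_pi τ⟩
  obtain ⟨hint, hle⟩ := hup _ hd
  have hge := hlow _ hd hint
  rw [cos_arccos hτ₁ hτ₂.le] at hle hge
  rw [mul_div_assoc, mul_div_assoc]
  exact ⟨mul_le_mul_of_nonneg_left hge hA.le, mul_le_mul_of_nonneg_left (hle.trans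
    (div_le_div_of_nonneg_right (le_max_right c C) (rpow_nonneg (arccos_nonneg τ) _))) hA.le⟩
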